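/- Let $R$ be a commutative ring and for $w = (a_1,\ldots,a_{m+1}; b_1,\ldots,b_{m+1}) \in \{0,1\}^{2(m+1)}$ let $\mathcal{J}_w = J_{(a_1,b_1)} \otimes \cdots \otimes J_{(a_{m+1},b_{m+1})} \in M_{2^{m+1}}(R)$, where $J_{(a,b)} = D^a P^b$ with $D = \mathrm{diag}(1,-1)$ and $P$ the swap matrix. Let $K = DP \otimes I_{2^m}$ and $q(w) = \sum_{i=1}^{m+1} a_i b_i + a_1 + b_1 \pmod 2$. If $q(w) = 1$, then $\mathcal{J}_w K + K \mathcal{J}_w^T = 0$, i.e., $\mathcal{J}_w$ lies in the symplectic Lie algebra $\mathfrak{sp}_{2^{m+1}}(R)$ defined by the form $K$. -/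

import Mathlib

/-!
`J_{(a,b)}ᵀ = (-1)^(a b) J_{(a,b)}`, and `J_{(a,b)}`, `J_{(c,d)}` commute up to the sign
`(-1)^(a d + b c)`. Both signs multiply along Kronecker products, so
`𝒥_wᵀ = (-1)^(∑ aᵢbᵢ) 𝒥_w` and `𝒥_w K = (-1)^(a₁+b₁) K 𝒥_w`. Hence
`𝒥_w K + K 𝒥_wᵀ = ((-1)^(a₁+b₁) + (-1)^(∑ aᵢbᵢ)) K 𝒥_w`, and `q(w) = 1` says that these two
signs are opposite.
-/

/-- `J (a, b) = D^a * P^b` where `D = diag(1,-1)` and `P` is the swap matrix. -/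
def Jmat (R : Type*) [CommRing R] (a b : Fin 2) : Matrix (Fin 2) (Fin 2) R :=
  (!![1, 0; 0, -1] : Matrix (Fin 2) (Fin 2) R) ^ (a : ℕ)
    * (!![0, 1; 1, 0] : Matrix (Fin 2) (Fin 2) R) ^ (b : ℕ)

/-- The iterated Kronecker product `J_{(a₁,b₁)} ⊗ ⋯ ⊗ J_{(a_{m+1},b_{m+1})}`,
realized on the index set `Fin (m+1) → Fin 2` (of cardinality `2^(m+1)`):
its `(x, y)` entry is the product of the corresponding entries of the factors. -/
def Jten {R : Type*} [CommRing R] {m : ℕ} (w : Fin (m + 1) → Fin 2 × Fin 2) :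
    Matrix (Fin (m + 1) → Fin 2) (Fin (m + 1) → Fin 2) R :=
  fun x y => ∏ i, Jmat R (w i).1 (w i).2 (x i) (y i)

open Matrix

namespace Matrix

variable {ι R : Type*} [Fintype ι] {m n p : ι → Type*}

def piKronecker [CommMonoid R] (A : ∀ i, Matrix (m i) (n i) R) :
    Matrix (∀ i, m i) (∀ i, n i) R :=
  fun x y => ∏ i, A i (x i) (y i)

theorem piKronecker_mul [CommSemiring R] [DecidableEq ι] [∀ i, Fintype (n i)]
    (A : ∀ i, Matrix (m i) (n i) R) (B : ∀ i, Matrix (n i) (p i) R) :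
    piKronecker A * piKronecker B = piKronecker fun i => A i * B i := by
  ext x y
  simp only [piKronecker, mul_apply, Fintype.prod_sum, Finset.prod_mul_distrib]

theorem piKronecker_transpose [CommMonoid R] (A : ∀ i, Matrix (m i) (n i) R) :
    (piKronecker A)ᵀ = piKronecker fun i => (A i)ᵀ :=
  rfl

theorem piKronecker_smul [CommMonoid R] (s : ι → R) (A : ∀ i, Matrix (m i) (n i) R) :
    piKronecker (fun i => s i • A i) = (∏ i, s i) • piKronecker A := by
  ext x y
  simp only [piKronecker, smul_apply, smul_eq_mul, Finset.prod_mul_distrib]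

end Matrix

section Jmat

variable {R : Type*} [CommRing R]

theorem Jmat_transpose (a b : Fin 2) :
    (Jmat R a b)ᵀ = (-1 : R) ^ ((a : ℕ) * b) • Jmat R a b := by
  fin_cases a <;> fin_cases b <;> ext i j <;> fin_cases i <;> fin_cases j <;> simp [Jmat]

theorem Jmat_mul_comm (a b c d : Fin 2) :
    Jmat R a b * Jmat R c d =
      (-1 : R) ^ ((a : ℕ) * d + (b : ℕ) * c) • (Jmat R c d * Jmat R a b) := by
  fin_cases a <;> fin_cases b <;> fin_cases c <;> fin_cases d <;> ext i j <;>
    fin_cases i <;> fin_cases j <;> simp [Jmat, mul_apply, Fin.sum_univ_two]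

end Jmat

section Jten

variable {R : Type*} [CommRing R] {m : ℕ}

theorem Jten_eq_piKronecker (w : Fin (m + 1) → Fin 2 × Fin 2) :
    (Jten w : Matrix _ _ R) = piKronecker fun i => Jmat R (w i).1 (w i).2 :=
  rfl

theorem Jten_transpose (w : Fin (m + 1) → Fin 2 × Fin 2) :
    (Jten w : Matrix _ _ R)ᵀ = (-1 : R) ^ (∑ i, ((w i).1 : ℕ) * (w i).2) • Jten w := by
  simp only [Jten_eq_piKronecker, piKronecker_transpose, Jmat_transpose]
  rw [piKronecker_smul (fun i => (-1 : R) ^ (((w i).1 : ℕ) * (w i).2)), Finset.prod_pow_eq_pow_sum]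

theorem Jten_mul_comm (v w : Fin (m + 1) → Fin 2 × Fin 2) :
    (Jten v * Jten w : Matrix _ _ R) =
      (-1 : R) ^ (∑ i, (((v i).1 : ℕ) * (w i).2 + ((v i).2 : ℕ) * (w i).1)) • (Jten w * Jten v) := by
  simp only [Jten_eq_piKronecker, piKronecker_mul]
  rw [funext fun i => Jmat_mul_comm (R := R) (v i).1 (v i).2 (w i).1 (w i).2,
    piKronecker_smul (fun i => (-1 : R) ^ (((v i).1 : ℕ) * (w i).2 + ((v i).2 : ℕ) * (w i).1)),
    Finset.prod_pow_eq_pow_sum]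

end Jten

theorem neg_one_pow_add_neg_one_pow_of_odd {R : Type*} [Ring R] {k l : ℕ} (h : Odd (k + l)) :
    (-1 : R) ^ k + (-1) ^ l = 0 := by
  rcases Nat.even_or_odd l with hl | hl
  · rw [(Nat.odd_add.mp h |>.mpr hl).neg_one_pow, hl.neg_one_pow, neg_add_cancel]
  · rw [(Nat.odd_add'.mp h |>.mp hl).neg_one_pow, hl.neg_one_pow, add_neg_cancel]

theorem Jten_mem_sp {R : Type*} [CommRing R] {m : ℕ}
    (w : Fin (m + 1) → Fin 2 × Fin 2)
    -- `K = DP ⊗ I_{2^m}`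
    (K : Matrix (Fin (m + 1) → Fin 2) (Fin (m + 1) → Fin 2) R)
    (hK : K = Jten (fun i => if i = 0 then ((1 : Fin 2), (1 : Fin 2)) else (0, 0)))
    (hq : ((∑ i, ((w i).1 : ℕ) * ((w i).2 : ℕ) + ((w 0).1 : ℕ) + ((w 0).2 : ℕ) : ℕ) : ZMod 2)
      = 1) :
    Jten w * K + K * Matrix.transpose (Jten w) = 0 := by
  set c : Fin (m + 1) → Fin 2 × Fin 2 := fun i => if i = 0 then (1, 1) else (0, 0) with hc
  have hsign : ∑ i, (((w i).1 : ℕ) * (c i).2 + ((w i).2 : ℕ) * (c i).1) = (w 0).1 + (w 0).2 := by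
    simp [hc, Fin.sum_univ_succ, Fin.succ_ne_zero]
  have hodd : Odd ((w 0).1 + (w 0).2 + ∑ i, ((w i).1 : ℕ) * (w i).2) := by
    rw [← ZMod.natCast_eq_one_iff_odd, ← hq]
    push_cast
    ring
  rw [hK, Jten_transpose, Matrix.mul_smul, Jten_mul_comm, hsign, ← add_smul,
    neg_one_pow_add_neg_one_pow_of_odd hodd, zero_smul]
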